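/- Let L be a countable first-order language consisting only of function symbols, and let X be a metrizable topological space of weight κ ≥ ℵ₀ equipped with an L-structure in which the interpretation of every function symbol of L is a continuous function on the corresponding finite power of X. Let 𝓔s be a set of equations in L, i.e. pairs (t₁, t₂) of L-terms in a common finite tuple of variables (x₁,…,xₘ). Call a subset S ⊆ X 𝓔s-independent if for every equation (t₁, t₂) ∈ 𝓔s and all pairwise distinct s₁,…,sₘ ∈ S one has t₁(s₁,…,sₘ) ≠ t₂(s₁,…,sₘ) (realizations of the terms in the structure X). If X is completely metrizable, then exactly one of the following holds: (S) there exists an ordinal γ < κ⁺ such that the γ-th Cantor–Bendixson derivative of every 𝓔s-independent subset of X is empty; (P) there exists a perfect 𝓔s-independent subset of X. -/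

import Mathlib

/-!
A perfect set is its own derivative of every order, so (S) and (P) exclude each other.
If (S) fails, then for every `γ < κ⁺` some independent set has a nonempty `γ`-th derivative; as
there are only `κ` basic open sets and `κ⁺` is regular, one basic set `W` meets such derivatives
for all `γ < κ⁺`. The same counting argument refines any finite disjoint family of basic sets with
this largeness property into twice as many: a point of `S^(γ+1)` is a limit of points of `S^(γ)`,
so each member contains two distinct points of `S^(γ)`, and small basic neighbourhoods of all
these points are disjoint and, the relations `t₁ ≠ t₂` being open, make every injective tuple
drawn from distinct pieces satisfy the first `n` equations. Iterating yields a Cantor scheme whose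
induced map embeds the Cantor space onto a perfect independent set.
-/

open Set Filter Cardinal FirstOrder

universe u v

/-- A topological space is completely metrizable if its topology is induced by a complete metric. -/
def CompletelyMetrizable (Y : Type*) [t : TopologicalSpace Y] : Prop :=
  ∃ m : MetricSpace Y, m.toUniformSpace.toTopologicalSpace = t ∧ @CompleteSpace Y m.toUniformSpace

/-- The weight of a topological space: the least cardinality of a topological basis. -/
noncomputable def topWeight (X : Type u) [TopologicalSpace X] : Cardinal.{u} :=
  ⨅ B : { B : Set (Set X) // TopologicalSpace.IsTopologicalBasis B }, Cardinal.mk B.1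

/-- A set is dense-in-itself if it is nonempty and has no isolated points
(in the subspace topology). -/
def DenseInItselfSet {X : Type*} [TopologicalSpace X] (S : Set X) : Prop :=
  S.Nonempty ∧ ∀ x ∈ S, AccPt x (𝓟 S)

/-- A set is perfect if it is nonempty, completely metrizable in the subspace topology,
and has no isolated points. -/
def IsPerfectSet {X : Type*} [TopologicalSpace X] (P : Set X) : Prop :=
  P.Nonempty ∧ CompletelyMetrizable P ∧ ∀ x ∈ P, AccPt x (𝓟 P)

/-- The `γ`-th Cantor–Bendixson derivative of a set: iterate the operation of removing
isolated points, taking intersections at limit stages. -/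
noncomputable def cbDeriv {X : Type u} [TopologicalSpace X] (A : Set X) (γ : Ordinal.{v}) :
    Set X :=
  Ordinal.limitRecOn γ A (fun _ ih => { x ∈ ih | AccPt x (𝓟 ih) })
    (fun o _ ih => ⋂ (o' : Ordinal.{v}) (h : o' < o), ih o' h)

/-- `S` is independent with respect to a set `E` of equations (pairs of terms)
in the language `L`. -/
def EqIndependent {L : FirstOrder.Language} {X : Type*} [L.Structure X]
    (E : Set (Σ m : ℕ, L.Term (Fin m) × L.Term (Fin m))) (S : Set X) : Prop :=
  ∀ e ∈ E, ∀ s : Fin e.1 → X, (∀ i, s i ∈ S) → Function.Injective s →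
    e.2.1.realize s ≠ e.2.2.realize s

open Topology Metric TopologicalSpace Function
open scoped ENNReal

section CantorBendixson

variable {X : Type u} [TopologicalSpace X]

@[simp] theorem cbDeriv_zero (A : Set X) : cbDeriv A (0 : Ordinal.{v}) = A :=
  Ordinal.limitRecOn_zero ..

theorem cbDeriv_succ (A : Set X) (γ : Ordinal.{v}) :
    cbDeriv A (Order.succ γ) = {x ∈ cbDeriv A γ | AccPt x (𝓟 (cbDeriv A γ))} := by
  rw [Order.succ_eq_add_one]
  exact Ordinal.limitRecOn_add_one ..

theorem cbDeriv_limit (A : Set X) {γ : Ordinal.{v}} (h : Order.IsSuccLimit γ) :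
    cbDeriv A γ = ⋂ (γ' : Ordinal.{v}) (_ : γ' < γ), cbDeriv A γ' :=
  Ordinal.limitRecOn_limit _ _ _ _ h

theorem cbDeriv_antitone (A : Set X) : Antitone (cbDeriv A : Ordinal.{v} → Set X) := by
  intro γ γ' hle
  induction γ' using WellFoundedLT.induction with
  | ind γ' ih =>
    rcases hle.eq_or_lt with rfl | hlt
    · exact subset_rfl
    rcases Ordinal.zero_or_succ_or_isSuccLimit γ' with rfl | ⟨δ, rfl⟩ | hlim
    · exact absurd hlt not_lt_zero
    · rw [cbDeriv_succ]
      exact (sep_subset _ _).trans (ih δ (Order.lt_succ δ) (Order.lt_succ_iff.mp hlt))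
    · rw [cbDeriv_limit A hlim]
      exact iInter₂_subset γ hlt

theorem cbDeriv_subset (A : Set X) (γ : Ordinal.{v}) : cbDeriv A γ ⊆ A := by
  simpa using cbDeriv_antitone A (zero_le (a := γ))

theorem cbDeriv_eq_self_of_forall_accPt {A : Set X} (h : ∀ x ∈ A, AccPt x (𝓟 A))
    (γ : Ordinal.{v}) : cbDeriv A γ = A := by
  induction γ using WellFoundedLT.induction with
  | ind γ ih =>
    rcases Ordinal.zero_or_succ_or_isSuccLimit γ with rfl | ⟨δ, rfl⟩ | hlim
    · exact cbDeriv_zero A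
    · rw [cbDeriv_succ, ih δ (Order.lt_succ δ)]
      exact sep_eq_self_iff_mem_true.mpr h
    · refine (cbDeriv_subset A γ).antisymm ?_
      rw [cbDeriv_limit A hlim]
      exact subset_iInter₂ fun γ' hγ' => (ih γ' hγ').ge

end CantorBendixson

theorem exists_forall_lt_succ_ord_of_antitone {κ : Cardinal.{u}} (hκ : ℵ₀ ≤ κ) {ι : Type u}
    (hι : #ι ≤ κ) {P : ι → Ordinal.{u} → Prop} (hP : ∀ i, Antitone (P i))
    (hex : ∀ γ < (Order.succ κ).ord, ∃ i, P i γ) :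
    ∃ i, ∀ γ < (Order.succ κ).ord, P i γ := by
  by_contra! hcon
  choose g hg hPg using hcon
  have : Nonempty ι := (hex 0 (Cardinal.ord_pos.2 (Order.bot_lt_succ κ))).nonempty
  have hsup : ⨆ i, g i < (Order.succ κ).ord :=
    Ordinal.iSup_lt_of_lt_cof (by
      rw [(Cardinal.isRegular_succ hκ).cof_ord]; exact hι.trans_lt (Order.lt_succ κ)) hg
  obtain ⟨i, hi⟩ := hex _ hsup
  exact hPg i (hP i (Ordinal.le_iSup g i) hi)

section Independence

variable {X : Type u} {ι : Type*} {m : ι → ℕ}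

def IsIndependent (R : ∀ i, Set (Fin (m i) → X)) (S : Set X) : Prop :=
  ∀ i (v : Fin (m i) → X), (∀ j, v j ∈ S) → Injective v → v ∈ R i

def IsIndependentFamily {k : ℕ} (R : Set (Fin k → X)) {ν : Type*} (G : ν → Set X) : Prop :=
  ∀ σ : Fin k → ν, Injective σ → ∀ v : Fin k → X, (∀ j, v j ∈ G (σ j)) → v ∈ R

variable [TopologicalSpace X]

def IsLargeFamily (R : ∀ i, Set (Fin (m i) → X)) (κ : Cardinal.{u}) {ν : Type*}
    (G : ν → Set X) : Prop :=
  ∀ γ < (Order.succ κ).ord, ∃ S, IsIndependent R S ∧ ∀ v, (cbDeriv S γ ∩ G v).Nonempty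

end Independence

theorem exists_injective_mem_cbDeriv_inter {X : Type u} [TopologicalSpace X] {ν : Type*}
    {G : ν → Set X} (hG : ∀ v, IsOpen (G v)) (hGd : Pairwise (Disjoint on G)) {S : Set X}
    {γ : Ordinal.{v}} (hS : ∀ v, (cbDeriv S (Order.succ γ) ∩ G v).Nonempty) :
    ∃ p : ν × Bool → X, Injective p ∧ ∀ v b, p (v, b) ∈ cbDeriv S γ ∩ G v := by
  have hpair : ∀ v, ∃ x y, x ∈ cbDeriv S γ ∩ G v ∧ y ∈ cbDeriv S γ ∩ G v ∧ x ≠ y := by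
    intro v
    obtain ⟨x, hx, hxG⟩ := hS v
    rw [cbDeriv_succ] at hx
    obtain ⟨y, ⟨hyG, hy⟩, hyx⟩ := accPt_iff_nhds.mp hx.2 (G v) ((hG v).mem_nhds hxG)
    exact ⟨x, y, ⟨hx.1, hxG⟩, ⟨hy, hyG⟩, hyx.symm⟩
  choose x y hx hy hxy using hpair
  have hmem : ∀ v b, cond b (y v) (x v) ∈ cbDeriv S γ ∩ G v := by
    intro v b
    cases b
    exacts [hx v, hy v]
  refine ⟨fun q => cond q.2 (y q.1) (x q.1), ?_, hmem⟩
  rintro ⟨v, b⟩ ⟨v', b'⟩ (h : cond b (y v) (x v) = cond b' (y v') (x v'))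
  obtain rfl : v = v' := by
    by_contra hne
    exact Set.disjoint_left.mp (hGd hne) (hmem v b).2 (h ▸ (hmem v' b').2)
  cases b <;> cases b'
  exacts [rfl, absurd h (hxy v), absurd h.symm (hxy v), rfl]

theorem exists_basic_nhds_isIndependentFamily {X : Type*} [MetricSpace X] {ι : Type*}
    {m : ι → ℕ} {ν : Type*} [Finite ν] {B : Set (Set X)} (hB : IsTopologicalBasis B)
    {R : ∀ i, Set (Fin (m i) → X)} (hR : ∀ i, IsOpen (R i)) {I : Set ι} (hI : I.Finite)
    {p : ν → X} (hp : Injective p)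
    (hpR : ∀ i ∈ I, ∀ σ : Fin (m i) → ν, Injective σ → p ∘ σ ∈ R i)
    {O : ν → Set X} (hO : ∀ w, O w ∈ 𝓝 (p w)) {ε : ℝ≥0∞} (hε : 0 < ε) :
    ∃ W : ν → Set X, (∀ w, W w ∈ B) ∧ (∀ w, p w ∈ W w) ∧ (∀ w, closure (W w) ⊆ O w) ∧
      Pairwise (Disjoint on W) ∧ (∀ w, ediam (W w) ≤ ε) ∧
      ∀ i ∈ I, IsIndependentFamily (R i) W := by
  obtain ⟨δ, -, hδ, hδε⟩ := ENNReal.lt_iff_exists_real_btwn.mp hε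
  have hδ0 : 0 < δ := ENNReal.ofReal_pos.mp hδ
  have hsep : ∀ᶠ r in 𝓝 (0 : ℝ), ∀ w w', w ≠ w' → 2 * r < dist (p w) (p w') :=
    eventually_all.2 fun w => eventually_all.2 fun w' => by
      by_cases h : w = w'
      · exact .of_forall fun _ hne => absurd h hne
      · have := dist_pos.mpr (hp.ne h)
        exact (eventually_lt_nhds (by linarith : 0 < dist (p w) (p w') / 2)).mono
          fun r hr _ => by linarith
  have hrel : ∀ᶠ r in 𝓝 (0 : ℝ), ∀ i ∈ I, ∀ σ : Fin (m i) → ν, Injective σ →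
      closedBall (p ∘ σ) r ⊆ R i :=
    (eventually_all_finite hI).2 fun i hi => eventually_all.2 fun σ => by
      by_cases hσ : Injective σ
      · exact (eventually_closedBall_subset ((hR i).mem_nhds (hpR i hi σ hσ))).mono
          fun _ h _ => h
      · exact .of_forall fun _ h => absurd h hσ
  have hpos : ∀ᶠ r in 𝓝[>] (0 : ℝ), 0 < r := eventually_mem_nhdsWithin
  have hsmall := (eventually_lt_nhds (half_pos hδ0)).and (hsep.and
    ((eventually_all.2 fun w => eventually_closedBall_subset (hO w)).and hrel))
  obtain ⟨r, hr0, hrδ, hr, hrO, hrR⟩ := (hpos.and (nhdsWithin_le_nhds hsmall)).exists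
  choose W hWB hpW hWball using fun w =>
    hB.exists_subset_of_mem_open (mem_ball_self hr0 : p w ∈ ball (p w) r) isOpen_ball
  refine ⟨W, hWB, hpW, fun w => ?_, fun w w' hne => ?_, fun w => ?_, fun i hi σ hσ v hv => ?_⟩
  · exact (closure_mono (hWball w)).trans (closure_ball_subset_closedBall.trans (hrO w))
  · exact (ball_disjoint_ball (by linarith [hr w w' hne])).mono (hWball w) (hWball w')
  · refine (ediam_le_of_forall_dist_le fun x hx y hy => ?_).trans hδε.le
    have := dist_triangle_right x y (p w)
    linarith [mem_ball.mp (hWball w hx), mem_ball.mp (hWball w hy)]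
  · refine hrR i hi σ hσ (mem_closedBall.mpr ((dist_pi_le_iff hr0.le).mpr fun j => ?_))
    exact (mem_ball.mp (hWball (σ j) (hv j))).le

theorem Cardinal.mk_arrow_le_of_finite {α : Type} [Finite α] {β : Type u} {κ : Cardinal.{u}}
    (hκ : ℵ₀ ≤ κ) (hβ : #β ≤ κ) : #(α → β) ≤ κ := by
  have := Fintype.ofFinite α
  rw [Cardinal.mk_arrow, Cardinal.mk_fintype α, Cardinal.lift_natCast, Cardinal.lift_uzero]
  exact (Cardinal.power_le_power_right hβ).trans (Cardinal.power_nat_le hκ)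

theorem PiNat.eventually_res_ne {α : Type*} {x y : ℕ → α} (h : x ≠ y) :
    ∀ᶠ n in atTop, PiNat.res x n ≠ PiNat.res y n := by
  obtain ⟨k, hk⟩ := Function.ne_iff.mp h
  exact (eventually_gt_atTop k).mono fun n hn hres => hk (PiNat.res_eq_res.mp hres hn)

section CantorScheme

open CantorScheme PiNat

variable {X : Type*}

theorem exists_continuous_injective_of_levels [PseudoMetricSpace X] [CompleteSpace X]
    (U : ∀ n, List.Vector Bool n → Set X)
    (hlink : ∀ n (w : List.Vector Bool (n + 1)), closure (U (n + 1) w) ⊆ U n w.tail)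
    (hdisj : ∀ n, Pairwise (Disjoint on U n))
    (hdiam : ∀ n (w : List.Vector Bool (n + 1)), ediam (U (n + 1) w) ≤ ((n : ℝ≥0∞) + 1)⁻¹)
    (hne : ∀ n v, (U n v).Nonempty) :
    ∃ g : (ℕ → Bool) → X, Continuous g ∧ Injective g ∧
      ∀ b n, g b ∈ U n ⟨res b n, res_length b n⟩ := by
  let A : List Bool → Set X := fun l => U l.length ⟨l, rfl⟩
  have hA : ∀ n (v : List.Vector Bool n), A v.1 = U n v := by
    rintro n ⟨l, rfl⟩
    rfl
  have hanti : ClosureAntitone A := fun l a => hlink l.length ⟨a :: l, rfl⟩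
  have hdisjA : CantorScheme.Disjoint A := fun l a b hab =>
    hdisj (l.length + 1) fun h => hab (List.cons.inj (congrArg Subtype.val h)).1
  have hvan : VanishingDiam A := by
    intro b
    rw [← tendsto_add_atTop_iff_nat 1]
    have hinv : Tendsto (fun n : ℕ => ((n : ℝ≥0∞) + 1)⁻¹) atTop (𝓝 0) := by
      simpa using (tendsto_add_atTop_iff_nat 1).mpr ENNReal.tendsto_inv_nat_nhds_zero
    refine tendsto_of_tendsto_of_tendsto_of_le_of_le tendsto_const_nhds hinv
      (fun _ => zero_le) fun n => ?_
    rw [hA (n + 1) ⟨res b (n + 1), res_length b (n + 1)⟩]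
    exact hdiam n _
  have hdom := hanti.map_of_vanishingDiam hvan fun l => hne _ _
  have hmem : ∀ b, b ∈ (inducedMap A).1 := fun b => hdom ▸ mem_univ b
  refine ⟨fun b => (inducedMap A).2 ⟨b, hmem b⟩,
    hvan.map_continuous.comp (continuous_id.subtype_mk hmem),
    fun b b' h => congrArg Subtype.val (hdisjA.map_injective h), fun b n => ?_⟩
  exact (hA n ⟨res b n, res_length b n⟩).subset (map_mem ⟨b, hmem b⟩ n)

theorem isPerfectSet_range [MetricSpace X] {g : (ℕ → Bool) → X} (hg : Continuous g)
    (hinj : Injective g) : IsPerfectSet (range g) := by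
  refine ⟨range_nonempty g, ⟨Subtype.metricSpace, rfl,
    completeSpace_coe_iff_isComplete.2 (isCompact_range hg).isComplete⟩, ?_⟩
  rintro _ ⟨b, rfl⟩
  let flip : ℕ → ℕ → Bool := fun k => Function.update b k (!b k)
  have hflip : Tendsto flip atTop (𝓝 b) := tendsto_pi_nhds.2 fun j =>
    tendsto_atTop_of_eventually_const (i₀ := j + 1) fun k hk =>
      Function.update_of_ne (by omega) _ _
  have hne : ∀ k, flip k ≠ b := fun k h => by simpa [flip] using congrFun h k
  exact accPt_iff_frequently.2 (((hg.tendsto b).comp hflip).frequently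
    (.of_forall fun k => ⟨hinj.ne (hne k), mem_range_self _⟩))

theorem isIndependent_range {ι : Type*} {m : ι → ℕ} {R : ∀ i, Set (Fin (m i) → X)}
    {U : ∀ n, List.Vector Bool n → Set X} {g : (ℕ → Bool) → X}
    (hgU : ∀ b n, g b ∈ U n ⟨res b n, res_length b n⟩)
    (hind : ∀ i, ∀ᶠ n in atTop, IsIndependentFamily (R i) (U n)) :
    IsIndependent R (range g) := by
  intro i v hv hvinj
  choose b hb using hv
  have hbinj : Injective b := fun j j' h => hvinj (by rw [← hb j, ← hb j', h])
  have hsep : ∀ᶠ n in atTop, ∀ j j', j ≠ j' → res (b j) n ≠ res (b j') n :=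
    eventually_all.2 fun j => eventually_all.2 fun j' => by
      by_cases h : j = j'
      · exact .of_forall fun _ hne => absurd h hne
      · exact (eventually_res_ne (hbinj.ne h)).mono fun _ hn _ => hn
  obtain ⟨n, hn, hsepn⟩ := ((hind i).and hsep).exists
  refine hn (fun j => ⟨res (b j) n, res_length _ _⟩) (fun j j' h => ?_) v
    fun j => hb j ▸ hgU (b j) n
  by_contra hjj
  exact hsepn j j' hjj (congrArg Subtype.val h)

end CantorScheme

section Construction

variable {X : Type u} [MetricSpace X] {ι : Type*} {m : ι → ℕ} {R : ∀ i, Set (Fin (m i) → X)}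
  {κ : Cardinal.{u}} {B : Set (Set X)}

theorem IsLargeFamily.nonempty {ν : Type*} {G : ν → Set X} (hG : IsLargeFamily R κ G) (v : ν) :
    (G v).Nonempty :=
  let ⟨_, _, hS⟩ := hG 0 (Cardinal.ord_pos.2 (Order.bot_lt_succ κ))
  (hS v).mono inter_subset_right

structure IsLargeBasicFamily (R : ∀ i, Set (Fin (m i) → X)) (κ : Cardinal.{u}) (B : Set (Set X))
    {ν : Type*} (G : ν → Set X) : Prop where
  mem_basis : ∀ v, G v ∈ B
  pairwise_disjoint : Pairwise (Disjoint on G)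
  isLarge : IsLargeFamily R κ G

theorem IsLargeBasicFamily.exists_children (hκ : ℵ₀ ≤ κ) (hB : IsTopologicalBasis B)
    (hBκ : #B ≤ κ) (hR : ∀ i, IsOpen (R i)) {I : Set ι} (hI : I.Finite) {n : ℕ}
    {G : List.Vector Bool n → Set X} (hG : IsLargeBasicFamily R κ B G) :
    ∃ G' : List.Vector Bool (n + 1) → Set X, IsLargeBasicFamily R κ B G' ∧
      (∀ w, closure (G' w) ⊆ G w.tail) ∧ (∀ w, ediam (G' w) ≤ ((n : ℝ≥0∞) + 1)⁻¹) ∧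
      ∀ i ∈ I, IsIndependentFamily (R i) G' := by
  let Good (H : List.Vector Bool (n + 1) → B) : Prop :=
    Pairwise (Disjoint on fun w => (H w : Set X)) ∧ (∀ w, closure (H w : Set X) ⊆ G w.tail) ∧
      (∀ w, ediam (H w : Set X) ≤ ((n : ℝ≥0∞) + 1)⁻¹) ∧
      ∀ i ∈ I, IsIndependentFamily (R i) fun w => (H w : Set X)
  have hex : ∀ γ < (Order.succ κ).ord, ∃ H, Good H ∧
      ∃ S, IsIndependent R S ∧ ∀ w, (cbDeriv S γ ∩ H w).Nonempty := by
    intro γ hγ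
    obtain ⟨S, hS, hSG⟩ := hG.isLarge (Order.succ γ)
      ((Cardinal.isSuccLimit_ord (hκ.trans (Order.le_succ κ))).succ_lt hγ)
    obtain ⟨p, hp, hpS⟩ := exists_injective_mem_cbDeriv_inter
      (fun v => hB.isOpen (hG.mem_basis v)) hG.pairwise_disjoint hSG
    let q : List.Vector Bool (n + 1) → X := fun w => p (w.tail, w.head)
    have hq : Injective q := hp.comp fun w w' h => by
      obtain ⟨htail, hhead⟩ := Prod.mk.inj h
      rw [← w.cons_head_tail, ← w'.cons_head_tail, htail, hhead]
    obtain ⟨W, hWB, hqW, hWG, hWd, hWdiam, hWR⟩ := exists_basic_nhds_isIndependentFamily hB hR hI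
      hq (fun i _ σ hσ => hS i (q ∘ σ) (fun j => cbDeriv_subset S γ (hpS _ _).1) (hq.comp hσ))
      (O := fun w => G w.tail) (fun w => (hB.isOpen (hG.mem_basis _)).mem_nhds (hpS _ _).2)
      (ENNReal.inv_pos.2 (by simp : (n : ℝ≥0∞) + 1 ≠ ∞))
    exact ⟨fun w => ⟨W w, hWB w⟩, ⟨hWd, hWG, hWdiam, hWR⟩, S, hS,
      fun w => ⟨q w, (hpS _ _).1, hqW w⟩⟩
  -- There are at most `κ` candidate families, so one of them works for all `γ < κ⁺`.
  obtain ⟨H, hH⟩ := exists_forall_lt_succ_ord_of_antitone hκ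
    (Cardinal.mk_arrow_le_of_finite hκ hBκ) (fun H _ _ hle ⟨hgood, S, hS, hne⟩ =>
      ⟨hgood, S, hS, fun w => (hne w).mono (inter_subset_inter_left _ (cbDeriv_antitone S hle))⟩)
    hex
  obtain ⟨hgood, -⟩ := hH 0 (Cardinal.ord_pos.2 (Order.bot_lt_succ κ))
  exact ⟨fun w => H w, ⟨fun w => (H w).2, hgood.1, fun γ hγ => (hH γ hγ).2⟩, hgood.2⟩

theorem exists_isPerfectSet_isIndependent [CompleteSpace X] [Countable ι] (hκ : ℵ₀ ≤ κ)
    (hB : IsTopologicalBasis B) (hBκ : #B ≤ κ) (hR : ∀ i, IsOpen (R i)) {W : Set X}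
    (hW : W ∈ B) (hlarge : IsLargeFamily R κ fun _ : List.Vector Bool 0 => W) :
    ∃ P, IsPerfectSet P ∧ IsIndependent R P := by
  obtain ⟨e, he⟩ := Countable.exists_injective_nat ι
  choose next hnext hlink hdiam hind using
    fun n (G : {G : List.Vector Bool n → Set X // IsLargeBasicFamily R κ B G}) =>
      G.2.exists_children hκ hB hBκ hR ((Set.finite_Iio (n + 1)).preimage he.injOn)
  let U : ∀ n, {G : List.Vector Bool n → Set X // IsLargeBasicFamily R κ B G} := fun n =>
    Nat.rec ⟨fun _ => W, fun _ => hW, fun v v' h => absurd (Subsingleton.elim v v') h, hlarge⟩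
      (fun n G => ⟨next n G, hnext n G⟩) n
  obtain ⟨g, hg, hginj, hgU⟩ := exists_continuous_injective_of_levels (fun n => (U n).1)
    (fun n => hlink n (U n)) (fun n => (U n).2.pairwise_disjoint) (fun n => hdiam n (U n))
    fun n => (U n).2.isLarge.nonempty
  refine ⟨range g, isPerfectSet_range hg hginj, isIndependent_range hgU fun i => ?_⟩
  filter_upwards [eventually_gt_atTop (e i)] with n hn
  obtain ⟨k, rfl⟩ := Nat.exists_eq_add_one_of_ne_zero (Nat.ne_zero_of_lt hn)
  exact hind k (U k) i hn

end Construction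

theorem cbDeriv_eq_empty_xor_exists_isPerfectSet {X : Type u} [MetricSpace X] [CompleteSpace X]
    {ι : Type*} [Countable ι] {m : ι → ℕ} {R : ∀ i, Set (Fin (m i) → X)}
    (hR : ∀ i, IsOpen (R i)) {κ : Cardinal.{u}} (hκ : ℵ₀ ≤ κ) {B : Set (Set X)}
    (hB : IsTopologicalBasis B) (hBκ : #B ≤ κ) :
    Xor (∃ γ : Ordinal.{u}, γ < (Order.succ κ).ord ∧ ∀ S, IsIndependent R S → cbDeriv S γ = ∅)
      (∃ P, IsPerfectSet P ∧ IsIndependent R P) := by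
  by_cases hP : ∃ P, IsPerfectSet P ∧ IsIndependent R P
  · refine Or.inr ⟨hP, ?_⟩
    rintro ⟨γ, -, hγ⟩
    obtain ⟨P, ⟨hPne, -, hPacc⟩, hPR⟩ := hP
    exact hPne.ne_empty ((cbDeriv_eq_self_of_forall_accPt hPacc γ).symm.trans (hγ P hPR))
  refine Or.inl ⟨?_, hP⟩
  by_contra! hS
  obtain ⟨W, hW⟩ := exists_forall_lt_succ_ord_of_antitone hκ hBκ
    (P := fun W γ => ∃ S, IsIndependent R S ∧ (cbDeriv S γ ∩ W).Nonempty)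
    (fun W _ _ hle ⟨S, hS, hne⟩ =>
      ⟨S, hS, hne.mono (inter_subset_inter_left _ (cbDeriv_antitone S hle))⟩)
    fun γ hγ => by
      obtain ⟨S, hSR, hne⟩ := hS γ hγ
      obtain ⟨x, hx⟩ := hne
      obtain ⟨W, hWB, hxW, -⟩ := hB.mem_nhds_iff.1 (univ_mem (f := 𝓝 x))
      exact ⟨⟨W, hWB⟩, S, hSR, x, hx, hxW⟩
  exact hP (exists_isPerfectSet_isIndependent hκ hB hBκ hR W.2 fun γ hγ =>
    let ⟨S, hSR, hne⟩ := hW γ hγ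
    ⟨S, hSR, fun _ => hne⟩)

theorem exists_isTopologicalBasis_mk_eq_topWeight (X : Type u) [TopologicalSpace X] :
    ∃ B : Set (Set X), IsTopologicalBasis B ∧ #B = topWeight X := by
  have : Nonempty { B : Set (Set X) // IsTopologicalBasis B } := ⟨⟨_, isTopologicalBasis_opens⟩⟩
  obtain ⟨B, hB⟩ := ciInf_mem fun B : { B : Set (Set X) // IsTopologicalBasis B } => #B.1
  exact ⟨B.1, B.2, hB⟩

namespace FirstOrder.Language

theorem Term.continuous_realize {L : Language} {X : Type*} [L.Structure X] [TopologicalSpace X]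
    (hcont : ∀ n (f : L.Functions n), Continuous fun v : Fin n → X => Structure.funMap f v)
    {α : Type*} (t : L.Term α) : Continuous fun v : α → X => t.realize v := by
  induction t with
  | var k => exact continuous_apply k
  | func f ts ih => exact (hcont _ f).comp (continuous_pi ih)

end FirstOrder.Language

def nonSolutions {L : Language} {X : Type*} [L.Structure X]
    (E : Set (Σ m : ℕ, L.Term (Fin m) × L.Term (Fin m))) (e : E) : Set (Fin e.1.1 → X) :=
  {v | e.1.2.1.realize v ≠ e.1.2.2.realize v}

theorem eqIndependent_iff_isIndependent {L : Language} {X : Type*} [L.Structure X]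
    {E : Set (Σ m : ℕ, L.Term (Fin m) × L.Term (Fin m))} {S : Set X} :
    EqIndependent E S ↔ IsIndependent (nonSolutions E) S :=
  ⟨fun h e => h e.1 e.2, fun h e he => h ⟨e, he⟩⟩

theorem statement5_general (L : FirstOrder.Language.{u, u})
    (hLfun : Countable (Σ n, L.Functions n))
    {X : Type u} [TopologicalSpace X] (hX : CompletelyMetrizable X)
    (κ : Cardinal.{u}) (hκ : ℵ₀ ≤ κ) (hw : topWeight X = κ)
    [M : L.Structure X]
    (hcont : ∀ (n : ℕ) (f : L.Functions n),
      Continuous fun v : Fin n → X => FirstOrder.Language.Structure.funMap f v)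
    (E : Set (Σ m : ℕ, L.Term (Fin m) × L.Term (Fin m))) :
    Xor'
      (∃ γ : Ordinal.{u}, γ < (Order.succ κ).ord ∧
        ∀ S : Set X, EqIndependent E S → cbDeriv S γ = ∅)
      (∃ P : Set X, IsPerfectSet P ∧ EqIndependent E P) := by
  obtain ⟨d, rfl, hd⟩ := hX
  obtain ⟨B, hB, hBw⟩ := exists_isTopologicalBasis_mk_eq_topWeight X
  simp only [eqIndependent_iff_isIndependent]
  exact cbDeriv_eq_empty_xor_exists_isPerfectSet
    (fun e => isOpen_ne_fun (e.1.2.1.continuous_realize hcont) (e.1.2.2.continuous_realize hcont))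
    hκ hB (hBw.trans hw).le

theorem statement5 (L : FirstOrder.Language.{u, u}) (hLrel : ∀ n, IsEmpty (L.Relations n))
    (hLfun : Countable (Σ n, L.Functions n))
    {X : Type u} [TopologicalSpace X] (hX : CompletelyMetrizable X)
    (κ : Cardinal.{u}) (hκ : ℵ₀ ≤ κ) (hw : topWeight X = κ)
    [M : L.Structure X]
    (hcont : ∀ (n : ℕ) (f : L.Functions n),
      Continuous fun v : Fin n → X => FirstOrder.Language.Structure.funMap f v)
    (E : Set (Σ m : ℕ, L.Term (Fin m) × L.Term (Fin m))) :
    Xor'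
      (∃ γ : Ordinal.{u}, γ < (Order.succ κ).ord ∧
        ∀ S : Set X, EqIndependent E S → cbDeriv S γ = ∅)
      (∃ P : Set X, IsPerfectSet P ∧ EqIndependent E P) :=
  statement5_general L hLfun hX κ hκ hw (M := M) hcont E
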